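/- For the fan graph F_{1,n} with n ≥ 4, the edge metric dimension equals n − 1. -/
import Mathlib


open SimpleGraph

/-- Distance from a vertex `v` to an edge `e = uw`: `min (d v u) (d v w)`. -/
noncomputable def edgeDist {V : Type*} (G : SimpleGraph V) (v : V) (e : Sym2 V) : ℕ :=
  Sym2.lift ⟨fun u w => min (G.dist v u) (G.dist v w), fun u w => by simp [min_comm]⟩ e

/-- `S` is an edge metric generator: every two distinct edges are distinguished
by some vertex of `S`. -/
def IsEdgeMetricGenerator {V : Type*} (G : SimpleGraph V) (S : Set V) : Prop :=
  ∀ e₁ ∈ G.edgeSet, ∀ e₂ ∈ G.edgeSet, e₁ ≠ e₂ →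
    ∃ v ∈ S, edgeDist G v e₁ ≠ edgeDist G v e₂

/-- The edge metric dimension: minimum cardinality of an edge metric generator. -/
noncomputable def edim {V : Type*} (G : SimpleGraph V) : ℕ :=
  sInf {k | ∃ S : Finset V, S.card = k ∧ IsEdgeMetricGenerator G ↑S}

/-- The fan graph `F₁,ₙ`: a path on `n` vertices plus a central vertex
(`none`) adjacent to every path vertex. -/
def fanGraph (n : ℕ) : SimpleGraph (Option (Fin n)) :=
  SimpleGraph.fromRel fun x y =>
    x = none ∨ ∃ i j : Fin n, x = some i ∧ y = some j ∧ (pathGraph n).Adj i j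

section FanAux

variable {n : ℕ}

lemma fan_adj_none_some (i : Fin n) : (fanGraph n).Adj none (some i) := by
  simp [fanGraph, fromRel_adj]

lemma fan_adj_some_none (i : Fin n) : (fanGraph n).Adj (some i) none :=
  (fan_adj_none_some i).symm

lemma fan_adj_some_some (i j : Fin n) :
    (fanGraph n).Adj (some i) (some j) ↔ (i.val + 1 = j.val ∨ j.val + 1 = i.val) := by
  simp only [fanGraph, fromRel_adj, pathGraph_adj]
  constructor
  · rintro ⟨hne, h | h⟩ <;> simp_all <;> tauto
  · intro h
    refine ⟨?_, Or.inl (Or.inr ⟨i, j, rfl, rfl, h⟩)⟩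
    simp only [ne_eq, Option.some.injEq]
    intro he; subst he; omega

lemma fan_dist_some_none (j : Fin n) : (fanGraph n).dist (some j) none = 1 :=
  dist_eq_one_iff_adj.mpr (fan_adj_some_none j)

lemma fan_dist_some_some (j i : Fin n) :
    (fanGraph n).dist (some j) (some i) =
      if j.val = i.val then 0
      else if j.val + 1 = i.val ∨ i.val + 1 = j.val then 1 else 2 := by
  split_ifs with h1 h2
  · have : j = i := Fin.ext h1
    subst this; exact SimpleGraph.dist_self
  · exact dist_eq_one_iff_adj.mpr ((fan_adj_some_some j i).mpr h2)
  · have hne : (some j : Option (Fin n)) ≠ some i := by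
      simp only [ne_eq, Option.some.injEq]; intro h; exact h1 (congrArg Fin.val h)
    have hle : (fanGraph n).dist (some j) (some i) ≤ 2 := by
      have := dist_le (Walk.cons (fan_adj_some_none j)
        (Walk.cons (fan_adj_none_some i) Walk.nil))
      simpa using this
    have hpos : 0 < (fanGraph n).dist (some j) (some i) :=
      Reachable.pos_dist_of_ne ⟨Walk.cons (fan_adj_some_none j)
        (Walk.cons (fan_adj_none_some i) Walk.nil)⟩ hne
    have hne1 : (fanGraph n).dist (some j) (some i) ≠ 1 := by
      rw [ne_eq, dist_eq_one_iff_adj, fan_adj_some_some]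
      omega
    omega

lemma edgeDist_mk {V : Type*} (G : SimpleGraph V) (v u w : V) :
    edgeDist G v s(u, w) = min (G.dist v u) (G.dist v w) := rfl

lemma edgeDist_none_spoke (i : Fin n) :
    edgeDist (fanGraph n) none s(none, some i) = 0 := by
  rw [edgeDist_mk]
  simp [SimpleGraph.dist_self]

lemma edgeDist_some_spoke (j i : Fin n) :
    edgeDist (fanGraph n) (some j) s(none, some i) = if j.val = i.val then 0 else 1 := by
  rw [edgeDist_mk, fan_dist_some_none, fan_dist_some_some]
  split_ifs <;> omega

lemma edgeDist_some_path (j k k' : Fin n) :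
    edgeDist (fanGraph n) (some j) s(some k, some k') =
      if j.val = k.val ∨ j.val = k'.val then 0
      else if j.val + 1 = k.val ∨ k.val + 1 = j.val ∨ j.val + 1 = k'.val ∨ k'.val + 1 = j.val
        then 1 else 2 := by
  rw [edgeDist_mk, fan_dist_some_some, fan_dist_some_some]
  split_ifs <;> omega

lemma fan_edge_cases {e : Sym2 (Option (Fin n))} (he : e ∈ (fanGraph n).edgeSet) :
    (∃ i : Fin n, e = s(none, some i)) ∨
      ∃ k k' : Fin n, k.val + 1 = k'.val ∧ e = s(some k, some k') := by
  induction e using Sym2.ind with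
  | _ x y =>
    rw [mem_edgeSet] at he
    match x, y with
    | none, none => exact absurd rfl he.ne
    | none, some i => exact Or.inl ⟨i, rfl⟩
    | some i, none => exact Or.inl ⟨i, Sym2.eq_swap⟩
    | some i, some j =>
      rw [fan_adj_some_some] at he
      rcases he with h | h
      · exact Or.inr ⟨i, j, h, rfl⟩
      · exact Or.inr ⟨j, i, h, Sym2.eq_swap⟩

lemma fan_lb (hn : 2 ≤ n) (S : Finset (Option (Fin n)))
    (hS : IsEdgeMetricGenerator (fanGraph n) ↑S) : n - 1 ≤ S.card := by
  classical
  have key : ∀ i k : Fin n, i ≠ k → some i ∈ S ∨ some k ∈ S := by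
    intro i k hik
    by_contra h
    push_neg at h
    obtain ⟨hi, hk⟩ := h
    have h1 : s(none, some i) ∈ (fanGraph n).edgeSet :=
      (mem_edgeSet _).mpr (fan_adj_none_some i)
    have h2 : s(none, some k) ∈ (fanGraph n).edgeSet :=
      (mem_edgeSet _).mpr (fan_adj_none_some k)
    have hne : s(none, (some i : Option (Fin n))) ≠ s(none, some k) := by
      simp only [ne_eq, Sym2.eq_iff]
      push_neg
      refine ⟨fun _ h => hik (Option.some_injective _ h), fun h => absurd h (by simp)⟩
    obtain ⟨v, hv, hd⟩ := hS _ h1 _ h2 hne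
    match v with
    | none => exact hd (by rw [edgeDist_none_spoke, edgeDist_none_spoke])
    | some j =>
      have hv' : some j ∈ S := hv
      have hji : j.val ≠ i.val := fun h => hi (Fin.ext h ▸ hv')
      have hjk : j.val ≠ k.val := fun h => hk (Fin.ext h ▸ hv')
      apply hd
      rw [edgeDist_some_spoke, edgeDist_some_spoke]
      split_ifs <;> omega
  set T := Finset.univ.filter fun i : Fin n => some i ∈ S with hT
  have hT1 : (Finset.univ.filter fun i : Fin n => some i ∉ S).card ≤ 1 := by
    rw [Finset.card_le_one]
    intro a ha b hb
    simp only [Finset.mem_filter] at ha hb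
    by_contra hab
    rcases key a b hab with h | h
    · exact ha.2 h
    · exact hb.2 h
  have hcard : T.card + (Finset.univ.filter fun i : Fin n => some i ∉ S).card = n := by
    rw [hT, Finset.card_filter_add_card_filter_not]
    simp
  have hTS : T.image some ⊆ S := by
    intro x hx
    simp only [Finset.mem_image, hT, Finset.mem_filter] at hx
    obtain ⟨a, ⟨_, ha⟩, rfl⟩ := hx
    exact ha
  have := Finset.card_le_card hTS
  rw [Finset.card_image_of_injective _ (Option.some_injective _)] at this
  omega

/-- The explicit generator: all path vertices except the last one. -/
def fanGen (n : ℕ) : Finset (Option (Fin n)) :=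
  (Finset.univ.filter fun i : Fin n => i.val < n - 1).image some

lemma fanGen_card (hn : 1 ≤ n) : (fanGen n).card = n - 1 := by
  rw [fanGen, Finset.card_image_of_injective _ (Option.some_injective _)]
  have : (Finset.univ.filter fun i : Fin n => i.val < n - 1) =
      Finset.Iio (⟨n - 1, by omega⟩ : Fin n) := by
    ext a
    simp [Fin.lt_def]
  rw [this, Fin.card_Iio]

lemma mem_fanGen (j : Fin n) (h : j.val < n - 1) :
    (some j : Option (Fin n)) ∈ (↑(fanGen n) : Set (Option (Fin n))) := by
  simp only [Finset.coe_image, Set.mem_image, fanGen, Finset.coe_filter]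
  exact ⟨j, by simp [h], rfl⟩

lemma wit_SP (hn : 4 ≤ n) (i k k' : Fin n) (hk : k.val + 1 = k'.val) :
    ∃ j : Fin n, j.val < n - 1 ∧
      edgeDist (fanGraph n) (some j) s(none, some i) ≠
        edgeDist (fanGraph n) (some j) s(some k, some k') := by
  have hk'n : k'.val < n := k'.isLt
  by_cases hik : i.val = k.val
  · by_cases hk' : k'.val < n - 1
    · refine ⟨k', hk', ?_⟩
      rw [edgeDist_some_spoke, edgeDist_some_path]
      split_ifs <;> omega
    · refine ⟨⟨k.val - 2, by omega⟩, show k.val - 2 < n - 1 by omega, ?_⟩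
      rw [edgeDist_some_spoke, edgeDist_some_path]
      simp only [Fin.val_mk]
      split_ifs <;> omega
  · refine ⟨k, by omega, ?_⟩
    rw [edgeDist_some_spoke, edgeDist_some_path]
    split_ifs <;> omega

lemma fan_gen (hn : 4 ≤ n) : IsEdgeMetricGenerator (fanGraph n) ↑(fanGen n) := by
  intro e1 he1 e2 he2 hne
  rcases fan_edge_cases he1 with ⟨i1, rfl⟩ | ⟨k1, k1', hk1, rfl⟩ <;>
    rcases fan_edge_cases he2 with ⟨i2, rfl⟩ | ⟨k2, k2', hk2, rfl⟩
  · -- spoke / spoke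
    have hii : i1.val ≠ i2.val := by
      intro h
      exact hne (by rw [Fin.ext h])
    have h1 : i1.val < n := i1.isLt
    have h2 : i2.val < n := i2.isLt
    by_cases hc : i1.val < n - 1
    · refine ⟨some i1, mem_fanGen i1 hc, ?_⟩
      rw [edgeDist_some_spoke, edgeDist_some_spoke]
      split_ifs <;> omega
    · refine ⟨some i2, mem_fanGen i2 (by omega), ?_⟩
      rw [edgeDist_some_spoke, edgeDist_some_spoke]
      split_ifs <;> omega
  · -- spoke / path
    obtain ⟨j, hj, hd⟩ := wit_SP hn i1 k2 k2' hk2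
    exact ⟨some j, mem_fanGen j hj, hd⟩
  · -- path / spoke
    obtain ⟨j, hj, hd⟩ := wit_SP hn i2 k1 k1' hk1
    exact ⟨some j, mem_fanGen j hj, hd.symm⟩
  · -- path / path
    have hkk : k1.val ≠ k2.val := by
      intro h
      apply hne
      have e1 : k1 = k2 := Fin.ext h
      have e2 : k1' = k2' := Fin.ext (by omega)
      rw [e1, e2]
    have h1 : k1'.val < n := k1'.isLt
    have h2 : k2'.val < n := k2'.isLt
    rcases lt_or_gt_of_ne hkk with hlt | hlt
    · refine ⟨some k1, mem_fanGen k1 (by omega), ?_⟩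
      rw [edgeDist_some_path, edgeDist_some_path]
      split_ifs <;> omega
    · refine ⟨some k2, mem_fanGen k2 (by omega), ?_⟩
      rw [edgeDist_some_path, edgeDist_some_path]
      split_ifs <;> omega

end FanAux

theorem edim_fan (n : ℕ) (hn : 4 ≤ n) : edim (fanGraph n) = n - 1 := by
  have hmem : (n - 1) ∈ {k | ∃ S : Finset (Option (Fin n)), S.card = k ∧
      IsEdgeMetricGenerator (fanGraph n) ↑S} :=
    ⟨fanGen n, fanGen_card (by omega), fan_gen hn⟩
  refine le_antisymm (Nat.sInf_le hmem) (le_csInf ⟨_, hmem⟩ ?_)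
  rintro k ⟨S, rfl, hS⟩
  exact fan_lb (by omega) S hS
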